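/- arXiv:2410.02276 — 3 statements merged into one kernel-verified Lean document; each statement's English description precedes it below -/
import Mathlib

section
/- Let u, v ∈ ℝ^N with v satisfying h^(d/2)‖v‖ = 1 (where h > 0 and ‖·‖ is the Euclidean norm), and suppose ‖u − v‖_max ≤ ε (max norm of the difference). If N·h^d ≤ (U−L)^d for some U > L, then the normalized inner product ⟨u,v⟩/(‖u‖‖v‖) ≥ 1 − 2(U−L)^(d/2)·ε. -/
lemma aux_cos {N : ℕ} (u v : EuclideanSpace ℝ (Fin N)) (hu : u ≠ 0) (hv : v ≠ 0) :
    1 - 2 * (‖u - v‖ / ‖v‖) ≤ (inner ℝ u v : ℝ) / (‖u‖ * ‖v‖) := by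
  have ha : (0:ℝ) < ‖u‖ := norm_pos_iff.2 hu
  have hb : (0:ℝ) < ‖v‖ := norm_pos_iff.2 hv
  have hw : (0:ℝ) ≤ ‖u - v‖ := norm_nonneg _
  have hI1 : ‖v‖^2 - ‖u - v‖ * ‖v‖ ≤ (inner ℝ u v : ℝ) := by
    have e1 : (inner ℝ u v : ℝ) = ‖v‖^2 + (inner ℝ (u - v) v : ℝ) := by
      rw [inner_sub_left, real_inner_self_eq_norm_sq]; ring
    have e2 : -(‖u - v‖ * ‖v‖) ≤ (inner ℝ (u - v) v : ℝ) :=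
      neg_le_of_abs_le (abs_real_inner_le_norm _ _)
    linarith
  have hI2 : |(inner ℝ u v : ℝ)| ≤ ‖u‖ * ‖v‖ := abs_real_inner_le_norm _ _
  have htri : ‖u‖ ≤ ‖v‖ + ‖u - v‖ := by
    have := norm_add_le v (u - v)
    simpa using this
  rw [le_div_iff₀ (by positivity)]
  have hrw : (1 - 2 * (‖u - v‖ / ‖v‖)) * (‖u‖ * ‖v‖)
      = ‖u‖ * ‖v‖ - 2 * ‖u - v‖ * ‖u‖ := by
    field_simp
  rw [hrw]
  rcases le_or_gt ‖v‖ ‖u - v‖ with hc | hc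
  · have hneg : -(‖u‖ * ‖v‖) ≤ (inner ℝ u v : ℝ) := neg_le_of_abs_le hI2
    nlinarith [mul_le_mul_of_nonneg_left hc ha.le]
  · rcases le_or_gt (2 * ‖u - v‖) ‖v‖ with hc2 | hc2
    · nlinarith [mul_nonneg (by linarith : (0:ℝ) ≤ ‖v‖ + ‖u - v‖ - ‖u‖)
        (by linarith : (0:ℝ) ≤ ‖v‖ - 2 * ‖u - v‖), sq_nonneg ‖u - v‖]
    · nlinarith [mul_pos hb (by linarith : (0:ℝ) < ‖v‖ - ‖u - v‖),
        mul_nonneg ha.le (by linarith : (0:ℝ) ≤ 2 * ‖u - v‖ - ‖v‖)]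

theorem stmt0 (N d : ℕ) (h ε U L : ℝ) (hh : 0 < h) (hUL : L < U) (hε : 0 ≤ ε)
    (u v : EuclideanSpace ℝ (Fin N)) (hu : u ≠ 0) (hv : v ≠ 0)
    (hnorm : h ^ ((d : ℝ) / 2) * ‖v‖ = 1)
    (hmax : ∀ i, |u i - v i| ≤ ε)
    (hN : (N : ℝ) * h ^ (d : ℕ) ≤ (U - L) ^ (d : ℕ)) :
    (inner ℝ u v : ℝ) / (‖u‖ * ‖v‖) ≥ 1 - 2 * (U - L) ^ ((d : ℝ) / 2) * ε := by
  have hULpos : (0:ℝ) < U - L := sub_pos.2 hUL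
  have hhp : (0:ℝ) < h ^ ((d:ℝ)/2) := Real.rpow_pos_of_pos hh _
  have hsq : Real.sqrt (h ^ (d:ℕ)) = h ^ ((d:ℝ)/2) := by
    rw [Real.sqrt_eq_rpow, ← Real.rpow_natCast h d, ← Real.rpow_mul hh.le]
    ring_nf
  have hsqU : Real.sqrt ((U - L) ^ (d:ℕ)) = (U - L) ^ ((d:ℝ)/2) := by
    rw [Real.sqrt_eq_rpow, ← Real.rpow_natCast (U - L) d, ← Real.rpow_mul hULpos.le]
    ring_nf
  have h1 : ‖u - v‖ ≤ Real.sqrt N * ε := by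
    have hle : ∑ i, ‖(u - v) i‖ ^ 2 ≤ (N:ℝ) * ε ^ 2 := by
      have hterm : ∀ i ∈ Finset.univ, ‖(u - v) i‖ ^ 2 ≤ ε ^ 2 := by
        intro i _
        have h2 : ‖(u - v) i‖ = |u i - v i| := by
          simp [PiLp.sub_apply, Real.norm_eq_abs]
        rw [h2]
        exact pow_le_pow_left₀ (abs_nonneg _) (hmax i) 2
      calc ∑ i, ‖(u - v) i‖ ^ 2 ≤ ∑ _i : Fin N, ε ^ 2 := Finset.sum_le_sum hterm
        _ = (N:ℝ) * ε ^ 2 := by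
            simp [Finset.sum_const, Finset.card_univ, nsmul_eq_mul]
    have := (EuclideanSpace.norm_eq (u - v)).le.trans (Real.sqrt_le_sqrt hle)
    rwa [Real.sqrt_mul (Nat.cast_nonneg N), Real.sqrt_sq hε] at this
  have hvinv : ‖v‖⁻¹ = h ^ ((d:ℝ)/2) := by
    have hveq : ‖v‖ = (h ^ ((d:ℝ)/2))⁻¹ := eq_inv_of_mul_eq_one_right
      (by linarith [mul_comm (h ^ ((d:ℝ)/2)) ‖v‖])
    rw [hveq, inv_inv]
  have hdiv : ‖u - v‖ / ‖v‖ ≤ (U - L) ^ ((d:ℝ)/2) * ε := by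
    rw [div_eq_mul_inv, hvinv]
    calc ‖u - v‖ * h ^ ((d:ℝ)/2) ≤ (Real.sqrt N * ε) * h ^ ((d:ℝ)/2) :=
          mul_le_mul_of_nonneg_right h1 hhp.le
      _ = Real.sqrt ((N:ℝ) * h ^ (d:ℕ)) * ε := by
          rw [Real.sqrt_mul (Nat.cast_nonneg N), hsq]; ring
      _ ≤ Real.sqrt ((U - L) ^ (d:ℕ)) * ε :=
          mul_le_mul_of_nonneg_right (Real.sqrt_le_sqrt hN) hε
      _ = (U - L) ^ ((d:ℝ)/2) * ε := by rw [hsqU]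
  have := aux_cos u v hu hv
  linarith
end

section
/- Let |φ⟩, |ψ⟩, |ζ⟩ be unit vectors in a complex inner product space. Suppose |⟨φ|ψ⟩| ≥ γ for some γ ∈ (0,1), and |⟨ψ|ζ⟩| ≥ η(γ) where η(γ) := (γ² + √(4 − 5γ² + γ⁴))/2. Then |⟨φ|ζ⟩| ≥ γ/2. -/
set_option maxHeartbeats 800000 in
theorem stmt1 {E : Type*} [NormedAddCommGroup E] [InnerProductSpace ℂ E]
    (φ ψ ζ : E) (hφ : ‖φ‖ = 1) (hψ : ‖ψ‖ = 1) (hζ : ‖ζ‖ = 1)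
    (γ : ℝ) (hγ : γ ∈ Set.Ioo (0 : ℝ) 1)
    (hφψ : ‖(inner ℂ φ ψ : ℂ)‖ ≥ γ)
    (hψζ : ‖(inner ℂ ψ ζ : ℂ)‖ ≥ (γ ^ 2 + Real.sqrt (4 - 5 * γ ^ 2 + γ ^ 4)) / 2) :
    ‖(inner ℂ φ ζ : ℂ)‖ ≥ γ / 2 := by
  obtain ⟨hγ0, hγ1⟩ := hγ
  have hXnn : (0:ℝ) ≤ 4 - 5 * γ ^ 2 + γ ^ 4 := by nlinarith [sq_nonneg γ, sq_nonneg (1 - γ^2), mul_nonneg (sub_nonneg.2 hγ1.le) hγ0.le]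
  set s := Real.sqrt (4 - 5 * γ ^ 2 + γ ^ 4) with hs
  have hsnn : 0 ≤ s := Real.sqrt_nonneg _
  have hs2 : s ^ 2 = 4 - 5 * γ ^ 2 + γ ^ 4 := Real.sq_sqrt hXnn
  have hsle : s ≤ 2 - γ ^ 2 := by
    rw [hs]
    have h1 : 4 - 5 * γ ^ 2 + γ ^ 4 ≤ (2 - γ ^ 2) ^ 2 := by nlinarith
    calc Real.sqrt (4 - 5 * γ ^ 2 + γ ^ 4) ≤ Real.sqrt ((2 - γ ^ 2) ^ 2) :=
          Real.sqrt_le_sqrt h1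
      _ = 2 - γ ^ 2 := Real.sqrt_sq (by nlinarith)
  set η : ℝ := (γ ^ 2 + s) / 2 with hη
  have hη_half : 1/2 ≤ η := by nlinarith [sq_nonneg (s - (1 - γ^2)), sq_nonneg (s + (1 - γ^2))]
  have hη1 : η ≤ 1 := by rw [hη]; linarith
  have hη0 : 0 < η := by linarith
  -- decomposition
  set a : ℂ := inner ℂ ψ φ with ha
  set b : ℂ := inner ℂ ψ ζ with hb
  set φ' : E := φ - a • ψ with hφ'
  set ζ' : E := ζ - b • ψ with hζ'
  have hψψ : (inner ℂ ψ ψ : ℂ) = 1 := by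
    rw [inner_self_eq_norm_sq_to_K, hψ]; norm_num
  have hna : ‖a‖ = ‖(inner ℂ φ ψ : ℂ)‖ := norm_inner_symm ψ φ
  -- norms of components
  have hφ'n : ‖φ'‖ ^ 2 = 1 - ‖a‖ ^ 2 := by
    have h := norm_sub_sq (𝕜 := ℂ) φ (a • ψ)
    have h2 : (inner ℂ φ (a • ψ) : ℂ) = a * (starRingEnd ℂ) a := by
      rw [inner_smul_right, ha, inner_conj_symm]
    have h3 : RCLike.re (inner ℂ φ (a • ψ) : ℂ) = ‖a‖ ^ 2 := by
      rw [h2, mul_comm, RCLike.conj_mul]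
      norm_cast
    rw [hφ', h, hφ, h3, norm_smul, hψ]
    simp; ring
  have hζ'n : ‖ζ'‖ ^ 2 = 1 - ‖b‖ ^ 2 := by
    have h := norm_sub_sq (𝕜 := ℂ) ζ (b • ψ)
    have h2 : (inner ℂ ζ (b • ψ) : ℂ) = b * (starRingEnd ℂ) b := by
      rw [inner_smul_right, hb, inner_conj_symm]
    have h3 : RCLike.re (inner ℂ ζ (b • ψ) : ℂ) = ‖b‖ ^ 2 := by
      rw [h2, mul_comm, RCLike.conj_mul]
      norm_cast
    rw [hζ', h, hζ, h3, norm_smul, hψ]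
    simp; ring
  -- key decomposition of inner ℂ φ ζ
  have hdec : (inner ℂ φ ζ : ℂ) = (starRingEnd ℂ) a * b + inner ℂ φ' ζ' := by
    have e2 : (inner ℂ φ ψ : ℂ) = (starRingEnd ℂ) a := by
      rw [ha]; exact (inner_conj_symm φ ψ).symm
    have e1 : (inner ℂ φ' ζ' : ℂ) = inner ℂ φ ζ - b * inner ℂ φ ψ
        - (starRingEnd ℂ) a * inner ℂ ψ ζ + (starRingEnd ℂ) a * b * inner ℂ ψ ψ := by
      rw [hφ', hζ', inner_sub_left, inner_sub_right, inner_sub_right,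
        inner_smul_left, inner_smul_right, inner_smul_left, inner_smul_right]
      ring
    rw [e1, e2, hψψ, ← hb]
    ring
  -- bound
  have hCS : ‖(inner ℂ φ' ζ' : ℂ)‖ ≤ ‖φ'‖ * ‖ζ'‖ := norm_inner_le_norm _ _
  have hlow : ‖(inner ℂ φ ζ : ℂ)‖ ≥ ‖a‖ * ‖b‖ - ‖φ'‖ * ‖ζ'‖ := by
    have h1 : ‖(starRingEnd ℂ) a * b‖ = ‖a‖ * ‖b‖ := by
      rw [norm_mul, RCLike.norm_conj]
    have h2 : ‖(starRingEnd ℂ) a * b‖ ≤ ‖(inner ℂ φ ζ : ℂ)‖ + ‖(inner ℂ φ' ζ' : ℂ)‖ := by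
      rw [hdec]
      simpa using norm_sub_le ((starRingEnd ℂ) a * b + (inner ℂ φ' ζ' : ℂ)) (inner ℂ φ' ζ' : ℂ)
    rw [h1] at h2; linarith
  -- algebraic part
  set t1 := Real.sqrt (1 - γ ^ 2) with ht1
  set t2 := Real.sqrt (1 - η ^ 2) with ht2
  have ht1nn : 0 ≤ t1 := Real.sqrt_nonneg _
  have ht2nn : 0 ≤ t2 := Real.sqrt_nonneg _
  have ht1sq : t1 ^ 2 = 1 - γ ^ 2 := Real.sq_sqrt (by nlinarith)
  have ht2sq : t2 ^ 2 = 1 - η ^ 2 := Real.sq_sqrt (by nlinarith)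
  have hkey : t1 * t2 = γ * η - γ / 2 := by
    have heq : (1 - γ ^ 2) * (1 - η ^ 2) = (γ * η - γ / 2) ^ 2 := by
      rw [hη]; linear_combination (-(1:ℝ)/4) * hs2
    have h1 : t1 * t2 = Real.sqrt ((1 - γ ^ 2) * (1 - η ^ 2)) :=
      (Real.sqrt_mul (by nlinarith) _).symm
    rw [h1, heq, Real.sqrt_sq (by nlinarith)]
  have hua : ‖a‖ ≥ γ := by rw [hna]; exact hφψ
  have hvb : ‖b‖ ≥ η := hψζ
  have hP : ‖φ'‖ ≤ t1 := by
    have h : ‖φ'‖ ^ 2 ≤ t1 ^ 2 := by rw [hφ'n, ht1sq]; nlinarith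
    calc ‖φ'‖ = Real.sqrt (‖φ'‖ ^ 2) := (Real.sqrt_sq (norm_nonneg _)).symm
      _ ≤ Real.sqrt (t1 ^ 2) := Real.sqrt_le_sqrt h
      _ = t1 := Real.sqrt_sq ht1nn
  have hQ : ‖ζ'‖ ≤ t2 := by
    have h : ‖ζ'‖ ^ 2 ≤ t2 ^ 2 := by rw [hζ'n, ht2sq]; nlinarith
    calc ‖ζ'‖ = Real.sqrt (‖ζ'‖ ^ 2) := (Real.sqrt_sq (norm_nonneg _)).symm
      _ ≤ Real.sqrt (t2 ^ 2) := Real.sqrt_le_sqrt h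
      _ = t2 := Real.sqrt_sq ht2nn
  have huv : γ * η ≤ ‖a‖ * ‖b‖ :=
    mul_le_mul hua hvb hη0.le (norm_nonneg _)
  have hPQ : ‖φ'‖ * ‖ζ'‖ ≤ t1 * t2 :=
    mul_le_mul hP hQ (norm_nonneg _) ht1nn
  linarith
end

section
/- For γ ∈ (0,1), the quantity η(γ) := (γ² + √((1−γ²)(4−γ²)))/2 satisfies 0 < η(γ) ≤ 1, and moreover γ·η(γ) − √(1−γ²)·√(1−η(γ)²) ≥ γ/2. -/
/-!
Writing `s = √((1 - γ²)(4 - γ²))`, the number `η(γ) = (γ² + s)/2` is the larger root of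
`t² - γ² t + (5γ²/4 - 1)`, whose discriminant is `(1 - γ²)(4 - γ²)`. Expanding, this quadratic
relation says exactly `(1 - γ²)(1 - η²) = (γ(η - 1/2))²`, and `1/2 ≤ η` because `1 - γ² ≤ s`.
Hence `√(1 - γ²) √(1 - η²) = γη - γ/2`: the inequality holds with equality.
(Geometrically, `γ = cos a`, `η = cos b` with `cos (a + b) = γ/2`.)
-/

open Real

noncomputable def eta (x : ℝ) : ℝ := (x ^ 2 + √((1 - x ^ 2) * (4 - x ^ 2))) / 2

section

variable {x : ℝ}

lemma sq_sqrt_discr (hx : x ^ 2 ≤ 1) :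
    √((1 - x ^ 2) * (4 - x ^ 2)) ^ 2 = (1 - x ^ 2) * (4 - x ^ 2) :=
  sq_sqrt (mul_nonneg (by linarith) (by linarith))

lemma one_sub_sq_le_sqrt_discr (hx : x ^ 2 ≤ 1) : 1 - x ^ 2 ≤ √((1 - x ^ 2) * (4 - x ^ 2)) :=
  le_sqrt_of_sq_le (by nlinarith)

lemma sqrt_discr_le_two_sub_sq (hx : x ^ 2 ≤ 1) : √((1 - x ^ 2) * (4 - x ^ 2)) ≤ 2 - x ^ 2 :=
  sqrt_le_iff.mpr ⟨by linarith, by nlinarith⟩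

lemma one_half_le_eta (hx : x ^ 2 ≤ 1) : 1 / 2 ≤ eta x := by
  have := one_sub_sq_le_sqrt_discr hx
  unfold eta
  linarith

lemma eta_le_one (hx : x ^ 2 ≤ 1) : eta x ≤ 1 := by
  have := sqrt_discr_le_two_sub_sq hx
  unfold eta
  linarith

lemma eta_sq_sub_sq_mul_eta (hx : x ^ 2 ≤ 1) : eta x ^ 2 - x ^ 2 * eta x + 5 / 4 * x ^ 2 - 1 = 0 := by
  unfold eta
  linear_combination (1 / 4 : ℝ) * sq_sqrt_discr hx

lemma sqrt_one_sub_sq_mul_sqrt_one_sub_eta_sq (hx₀ : 0 ≤ x) (hx : x ^ 2 ≤ 1) :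
    √(1 - x ^ 2) * √(1 - eta x ^ 2) = x * (eta x - 1 / 2) := by
  have hprod : (1 - x ^ 2) * (1 - eta x ^ 2) = (x * (eta x - 1 / 2)) ^ 2 := by
    linear_combination (-1 : ℝ) * eta_sq_sub_sq_mul_eta hx
  have hnonneg : 0 ≤ x * (eta x - 1 / 2) :=
    mul_nonneg hx₀ (sub_nonneg.mpr (one_half_le_eta hx))
  rw [← sqrt_mul (by linarith), hprod, sqrt_sq hnonneg]

lemma mul_eta_sub_sqrt_mul_sqrt (hx₀ : 0 ≤ x) (hx : x ^ 2 ≤ 1) :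
    x * eta x - √(1 - x ^ 2) * √(1 - eta x ^ 2) = x / 2 := by
  rw [sqrt_one_sub_sq_mul_sqrt_one_sub_eta_sq hx₀ hx]
  ring

end

theorem stmt2 (γ : ℝ) (hγ : γ ∈ Set.Ioo (0 : ℝ) 1) :
    0 < (γ ^ 2 + Real.sqrt ((1 - γ ^ 2) * (4 - γ ^ 2))) / 2 ∧
    (γ ^ 2 + Real.sqrt ((1 - γ ^ 2) * (4 - γ ^ 2))) / 2 ≤ 1 ∧
    γ * ((γ ^ 2 + Real.sqrt ((1 - γ ^ 2) * (4 - γ ^ 2))) / 2) -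
      Real.sqrt (1 - γ ^ 2) *
        Real.sqrt (1 - ((γ ^ 2 + Real.sqrt ((1 - γ ^ 2) * (4 - γ ^ 2))) / 2) ^ 2) ≥ γ / 2 := by
  obtain ⟨hγ₀, hγ₁⟩ := hγ
  have hsq : γ ^ 2 ≤ 1 := by nlinarith
  exact ⟨lt_of_lt_of_le (by norm_num) (one_half_le_eta hsq), eta_le_one hsq,
    (mul_eta_sub_sqrt_mul_sqrt hγ₀.le hsq).ge⟩
end
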